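/- arXiv:2310.04844 — 2 statements merged into one kernel-verified Lean document; each statement's English description precedes it below -/
import Mathlib

section
/- Let u ∈ [0.4196, 0.4197] and set v = −2u² − u. Then for the Jacobian matrix J = [[−2u − 1, 2v], [2u, 2v + 1]] of the vector field X₀(u,v) = (−u² + v² − u, u² + v² + v) at (u,v), one has trace J = 2(v − u) < 0 and (trace J)² < 4 det J, where det J = −8uv − 2u − 2v − 1. Consequently the eigenvalues of J are non-real complex conjugates with negative real part (a stable focus). -/
/-- For `u ∈ [0.4196, 0.4197]` and `v = −2u² − u`, the Jacobian
`J = [[−2u−1, 2v], [2u, 2v+1]]` of `X₀` at `(u,v)` has `trace J = 2(v−u) < 0`,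
`det J = −8uv − 2u − 2v − 1`, and `(trace J)² < 4 det J`; hence its eigenvalues are
non-real complex conjugates with negative real part (a stable focus). -/
theorem nontrivial_equilibrium_stable_focus
    (u : ℝ) (hu : u ∈ Set.Icc (0.4196 : ℝ) 0.4197)
    (v : ℝ) (hv : v = -2 * u ^ 2 - u)
    (J : Matrix (Fin 2) (Fin 2) ℝ)
    (hJ : J = !![-2 * u - 1, 2 * v; 2 * u, 2 * v + 1]) :
    J.trace = 2 * (v - u) ∧ J.trace < 0 ∧
    J.det = -8 * u * v - 2 * u - 2 * v - 1 ∧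
    J.trace ^ 2 < 4 * J.det ∧
    (∀ z : ℂ, z ^ 2 - (J.trace : ℂ) * z + (J.det : ℂ) = 0 →
      z.re < 0 ∧ z.im ≠ 0 ∧
        (starRingEnd ℂ z) ^ 2 - (J.trace : ℂ) * (starRingEnd ℂ z) + (J.det : ℂ) = 0) := by
  obtain ⟨hu1, hu2⟩ := hu
  have htr : J.trace = 2 * (v - u) := by
    subst hJ; simp [Matrix.trace_fin_two]; ring
  have hdet : J.det = -8 * u * v - 2 * u - 2 * v - 1 := by
    subst hJ; simp [Matrix.det_fin_two]; ring
  have htrneg : J.trace < 0 := by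
    rw [htr, hv]; nlinarith
  have hdisc : J.trace ^ 2 < 4 * J.det := by
    rw [htr, hdet, hv]; nlinarith [sq_nonneg (u - 0.4196), sq_nonneg (u - 0.4197), sq_nonneg u]
  refine ⟨htr, htrneg, hdet, hdisc, fun z hz => ?_⟩
  set t := J.trace with ht
  set d := J.det with hd
  have hre : z.re ^ 2 - z.im ^ 2 - t * z.re + d = 0 := by
    have := congrArg Complex.re hz
    simpa [pow_two, Complex.mul_re, Complex.mul_im, Complex.sub_re, Complex.add_re,
      Complex.ofReal_re, Complex.ofReal_im] using this
  have him : 2 * z.re * z.im - t * z.im = 0 := by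
    have := congrArg Complex.im hz
    simp [pow_two, Complex.mul_re, Complex.mul_im, Complex.sub_im, Complex.add_im,
      Complex.ofReal_re, Complex.ofReal_im] at this
    linarith
  have himne : z.im ≠ 0 := by
    intro h0
    rw [h0] at hre
    nlinarith [sq_nonneg (2 * z.re - t)]
  have hxre : z.re = t / 2 := by
    have : z.im * (2 * z.re - t) = 0 := by linarith [him]; 
    rcases mul_eq_zero.mp this with h | h
    · exact absurd h himne
    · linarith
  refine ⟨by rw [hxre]; linarith, himne, ?_⟩
  have := congrArg (starRingEnd ℂ) hz
  simpa [map_sub, map_add, map_mul, map_pow, Complex.conj_ofReal] using this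
end

section
/- Let x* be the unique real root of the cubic x³ + x² + x − 1 and consider the planar vector field F(x,y) = (1 − x − x² − x³ − 2xy, −y − y² − x² y). Then (x*, 0) is an equilibrium of F, the Jacobian matrix of F at (x*, 0) is upper triangular with diagonal entries −1 − 2x* − 3x*² and −1 − x*², and both of these eigenvalues are negative; hence (x*, 0) is a hyperbolic stable node. -/
/-!
The first component of the field restricted to `y = 0` is `-(x³ + x² + x − 1)`, so the
root `x*` gives an equilibrium; the second component is divisible by `y`, which
makes the Jacobian on `y = 0` upper triangular. Its diagonal entries are negative for every
`x`: `3x² + 2x + 1` has negative discriminant.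
-/

open ContinuousLinearMap

def chartField (p : ℝ × ℝ) : ℝ × ℝ :=
  (1 - p.1 - p.1 ^ 2 - p.1 ^ 3 - 2 * p.1 * p.2, -p.2 - p.2 ^ 2 - p.1 ^ 2 * p.2)

noncomputable def chartFieldJacobian (p : ℝ × ℝ) : ℝ × ℝ →L[ℝ] ℝ × ℝ :=
  ((-1 - 2 * p.1 - 3 * p.1 ^ 2 - 2 * p.2) • fst ℝ ℝ ℝ + (-2 * p.1) • snd ℝ ℝ ℝ).prod
    ((-2 * p.1 * p.2) • fst ℝ ℝ ℝ + (-1 - 2 * p.2 - p.1 ^ 2) • snd ℝ ℝ ℝ)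

@[simp]
theorem chartFieldJacobian_apply (p q : ℝ × ℝ) :
    chartFieldJacobian p q =
      ((-1 - 2 * p.1 - 3 * p.1 ^ 2 - 2 * p.2) * q.1 + (-2 * p.1) * q.2,
        (-2 * p.1 * p.2) * q.1 + (-1 - 2 * p.2 - p.1 ^ 2) * q.2) := by
  simp [chartFieldJacobian]

theorem hasFDerivAt_chartField (p : ℝ × ℝ) : HasFDerivAt chartField (chartFieldJacobian p) p := by
  have hx : HasFDerivAt (fun q : ℝ × ℝ => q.1) (fst ℝ ℝ ℝ) p := hasFDerivAt_fst
  have hy : HasFDerivAt (fun q : ℝ × ℝ => q.2) (snd ℝ ℝ ℝ) p := hasFDerivAt_snd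
  have h1 := ((((hasFDerivAt_const (1 : ℝ) p).sub hx).sub (hx.pow 2)).sub (hx.pow 3)).sub
    ((hx.const_mul 2).mul hy)
  have h2 := ((hy.neg).sub (hy.pow 2)).sub ((hx.pow 2).mul hy)
  refine (h1.prodMk h2).congr_fderiv ?_
  ext <;> simp <;> ring

theorem chartField_apply_eq_zero_iff (x : ℝ) :
    chartField (x, 0) = 0 ↔ x ^ 3 + x ^ 2 + x - 1 = 0 := by
  simp only [chartField, Prod.mk_eq_zero]
  constructor
  · rintro ⟨h, -⟩
    linarith
  · intro h
    exact ⟨by linarith, by ring⟩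

theorem neg_one_sub_two_mul_sub_three_mul_sq_neg (x : ℝ) : -1 - 2 * x - 3 * x ^ 2 < 0 := by
  nlinarith [sq_nonneg (3 * x + 1)]

theorem neg_one_sub_sq_neg (x : ℝ) : -1 - x ^ 2 < 0 := by
  nlinarith [sq_nonneg x]

theorem infinite_equilibrium_stable_node_general
    (x : ℝ) (hroot : x ^ 3 + x ^ 2 + x - 1 = 0)
    (F : ℝ × ℝ → ℝ × ℝ)
    (hF : ∀ p : ℝ × ℝ, F p = (1 - p.1 - p.1 ^ 2 - p.1 ^ 3 - 2 * p.1 * p.2,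
      -p.2 - p.2 ^ 2 - p.1 ^ 2 * p.2)) :
    F (x, 0) = (0, 0) ∧
    (∃ L : ℝ × ℝ →L[ℝ] ℝ × ℝ, HasFDerivAt F L (x, 0) ∧
      (∀ a b : ℝ, L (a, b) = ((-1 - 2 * x - 3 * x ^ 2) * a + (-2 * x) * b,
        (-1 - x ^ 2) * b))) ∧
    -1 - 2 * x - 3 * x ^ 2 < 0 ∧ -1 - x ^ 2 < 0 := by
  obtain rfl : F = chartField := funext hF
  refine ⟨(chartField_apply_eq_zero_iff x).mpr hroot,
    ⟨chartFieldJacobian (x, 0), hasFDerivAt_chartField (x, 0), fun a b => ?_⟩,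
    neg_one_sub_two_mul_sub_three_mul_sq_neg x, neg_one_sub_sq_neg x⟩
  simp

/-- Let `x*` be the unique real root of `x³ + x² + x − 1` and
`F(x,y) = (1 − x − x² − x³ − 2xy, −y − y² − x²y)`. Then `(x*, 0)` is an equilibrium of
`F`, the Jacobian of `F` at `(x*, 0)` is upper triangular with diagonal entries
`−1 − 2x* − 3x*²` and `−1 − x*²`, both negative; hence `(x*, 0)` is a hyperbolic stable
node. -/
theorem infinite_equilibrium_stable_node
    (x : ℝ) (hroot : x ^ 3 + x ^ 2 + x - 1 = 0)
    (huniq : ∀ x' : ℝ, x' ^ 3 + x' ^ 2 + x' - 1 = 0 → x' = x)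
    (F : ℝ × ℝ → ℝ × ℝ)
    (hF : ∀ p : ℝ × ℝ, F p = (1 - p.1 - p.1 ^ 2 - p.1 ^ 3 - 2 * p.1 * p.2,
      -p.2 - p.2 ^ 2 - p.1 ^ 2 * p.2)) :
    F (x, 0) = (0, 0) ∧
    (∃ L : ℝ × ℝ →L[ℝ] ℝ × ℝ, HasFDerivAt F L (x, 0) ∧
      (∀ a b : ℝ, L (a, b) = ((-1 - 2 * x - 3 * x ^ 2) * a + (-2 * x) * b,
        (-1 - x ^ 2) * b))) ∧
    -1 - 2 * x - 3 * x ^ 2 < 0 ∧ -1 - x ^ 2 < 0 :=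
  infinite_equilibrium_stable_node_general x hroot F hF
end
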